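/- Let w₁, …, w₁₄ be the vectors in ℝ⁴ obtained by appending a fourth coordinate 0 to the thirteen Yu–Oh vectors v₁=(1,0,0), v₂=(0,1,0), v₃=(0,0,1), v₄=(0,1,1), v₅=(0,1,−1), v₆=(1,0,1), v₇=(1,0,−1), v₈=(1,1,0), v₉=(1,−1,0), v₁₀=(1,1,1), v₁₁=(−1,1,1), v₁₂=(1,−1,1), v₁₃=(1,1,−1), together with w₁₄=(0,0,0,1). Let YO⁴₁₄ be the simple graph on Fin 14 in which distinct i, j are adjacent iff the dot product of wᵢ and wⱼ is 0 (so w₁₄ is adjacent to all other vertices). Then: (a) the chromatic number of YO⁴₁₄ equals 5; and (b) any two distinct vertices of YO⁴₁₄ are adjacent or have a common neighbor, i.e. YO⁴₁₄ has diameter at most 2 (and it is not complete, so its diameter is exactly 2). -/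

import Mathlib

/-- The orthogonality graph of a finite list of vectors in `ℝ^d`: distinct indices
are adjacent iff the corresponding vectors have dot product `0`. -/
def orthoGraph {m d : ℕ} (v : Fin m → Fin d → ℝ) : SimpleGraph (Fin m) where
  Adj i j := i ≠ j ∧ ∑ a, v i a * v j a = 0
  symm := by
    constructor
    rintro i j ⟨hne, hdot⟩
    refine ⟨hne.symm, ?_⟩
    rw [Finset.sum_congr rfl fun a _ => mul_comm (v j a) (v i a)]
    exact hdot
  loopless := by constructor; rintro i ⟨h, -⟩; exact h rfl

/-- The 14 vectors in `ℝ⁴`: the thirteen Yu–Oh vectors with a fourth coordinate `0`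
appended, together with `w₁₄ = (0,0,0,1)` (index `i : Fin 14` corresponds to
`w_{i+1}`). -/
def yuOh14Vecs : Fin 14 → Fin 4 → ℝ :=
  ![![1, 0, 0, 0], ![0, 1, 0, 0], ![0, 0, 1, 0], ![0, 1, 1, 0], ![0, 1, -1, 0],
    ![1, 0, 1, 0], ![1, 0, -1, 0], ![1, 1, 0, 0], ![1, -1, 0, 0], ![1, 1, 1, 0],
    ![-1, 1, 1, 0], ![1, -1, 1, 0], ![1, 1, -1, 0], ![0, 0, 0, 1]]

/-! The vector `w₁₄` is orthogonal to all the others, so vertex `13` is universal and a proper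
`4`-colouring restricts to a proper `3`-colouring of the Yu–Oh graph on the first thirteen
vertices. That graph is not `3`-colourable: the triangles `{0,1,2}`, `{0,3,4}`, `{1,5,6}`,
`{2,7,8}` force each pair `{3,4}`, `{5,6}`, `{7,8}` to use the two colours missing at its apex,
and however these pairs are oriented, one of the vertices `9, …, 12` (each adjacent to one
vertex of every pair) sees all three colours. An explicit `5`-colouring gives the upper bound.
The vectors have integer entries, so adjacency is decided by integer dot products. -/

open SimpleGraph

theorem SimpleGraph.IsUniversal.colorable_comap {V W : Type*} {G : SimpleGraph V} {v : V}
    (hv : G.IsUniversal v) {f : W → V} (hf : ∀ w, f w ≠ v) {n : ℕ}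
    (hG : G.Colorable (n + 1)) : (G.comap f).Colorable n := by
  obtain ⟨C⟩ := hG
  let C' : (G.comap f).Coloring {c // c ≠ C v} :=
    Coloring.mk (fun w => ⟨C (f w), (C.valid (hv (hf w).symm)).symm⟩)
      fun h heq => C.valid h (congrArg Subtype.val heq)
  simpa [Fintype.card_subtype_compl] using C'.colorable

theorem SimpleGraph.ediam_eq_two_of_adj_or_exists_adj {V : Type*} {G : SimpleGraph V}
    (hle : ∀ u v, u ≠ v → G.Adj u v ∨ ∃ w, G.Adj u w ∧ G.Adj w v)
    (hge : ∃ u v, u ≠ v ∧ ¬ G.Adj u v) : G.ediam = 2 := by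
  refine le_antisymm (ediam_le_of_edist_le fun u v => ?_) ?_
  · rcases eq_or_ne u v with rfl | huv
    · simp
    rcases hle u v huv with hadj | ⟨w, huw, hwv⟩
    · exact (edist_le_one_iff_adj_or_eq.2 (.inl hadj)).trans one_le_two
    · simpa using (Walk.cons huw hwv.toWalk).edist_le
  · obtain ⟨u, v, huv, hnadj⟩ := hge
    have hcommon : (G.commonNeighbors u v).Nonempty := by
      obtain ⟨w, huw, hwv⟩ := (hle u v huv).resolve_left hnadj
      exact ⟨w, huw, hwv.symm⟩
    exact (edist_eq_two_iff.2 ⟨huv, hnadj, hcommon⟩).symm.le.trans edist_le_ediam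

theorem orthoGraph_intCast_adj_iff {m d : ℕ} (v : Fin m → Fin d → ℤ) (i j : Fin m) :
    (orthoGraph fun i a => (v i a : ℝ)).Adj i j ↔ i ≠ j ∧ ∑ a, v i a * v j a = 0 := by
  simp only [orthoGraph]
  exact_mod_cast Iff.rfl

instance {m d : ℕ} (v : Fin m → Fin d → ℤ) :
    DecidableRel (orthoGraph fun i a => (v i a : ℝ)).Adj :=
  fun i j => decidable_of_iff _ (orthoGraph_intCast_adj_iff v i j).symm

def yuOh14IntVecs : Fin 14 → Fin 4 → ℤ :=
  ![![1, 0, 0, 0], ![0, 1, 0, 0], ![0, 0, 1, 0], ![0, 1, 1, 0], ![0, 1, -1, 0],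
    ![1, 0, 1, 0], ![1, 0, -1, 0], ![1, 1, 0, 0], ![1, -1, 0, 0], ![1, 1, 1, 0],
    ![-1, 1, 1, 0], ![1, -1, 1, 0], ![1, 1, -1, 0], ![0, 0, 0, 1]]

theorem yuOh14Vecs_eq_intCast : yuOh14Vecs = fun i a => (yuOh14IntVecs i a : ℝ) := by
  ext i a
  fin_cases i <;> fin_cases a <;> simp [yuOh14Vecs, yuOh14IntVecs]

theorem yuOh14_isUniversal_last : (orthoGraph yuOh14Vecs).IsUniversal 13 := by
  rw [yuOh14Vecs_eq_intCast]
  unfold IsUniversal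
  decide

set_option synthInstance.maxSize 256 in
theorem yuOh14_comap_castSucc_not_colorable_three :
    ¬ ((orthoGraph yuOh14Vecs).comap Fin.castSucc).Colorable 3 := by
  rw [yuOh14Vecs_eq_intCast]
  rintro ⟨C⟩
  -- Each colour is quantified right after those of its earlier neighbours, so `decide` prunes.
  have key : ∀ c₀ c₁ c₂ : Fin 3, c₀ ≠ c₁ → c₀ ≠ c₂ → c₁ ≠ c₂ →
      ∀ c₃ c₄ : Fin 3, c₀ ≠ c₃ → c₀ ≠ c₄ → c₃ ≠ c₄ →
      ∀ c₅ c₆ : Fin 3, c₁ ≠ c₅ → c₁ ≠ c₆ → c₅ ≠ c₆ →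
      ∀ c₇ c₈ : Fin 3, c₂ ≠ c₇ → c₂ ≠ c₈ → c₇ ≠ c₈ →
      ∀ c₉ : Fin 3, c₄ ≠ c₉ → c₆ ≠ c₉ → c₈ ≠ c₉ →
      ∀ c₁₀ : Fin 3, c₄ ≠ c₁₀ → c₅ ≠ c₁₀ → c₇ ≠ c₁₀ →
      ∀ c₁₁ : Fin 3, c₃ ≠ c₁₁ → c₆ ≠ c₁₁ → c₇ ≠ c₁₁ →
      ∀ c₁₂ : Fin 3, c₃ ≠ c₁₂ → c₅ ≠ c₁₂ → c₈ ≠ c₁₂ → False := by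
    decide
  refine key (C 0) (C 1) (C 2) ?_ ?_ ?_ (C 3) (C 4) ?_ ?_ ?_ (C 5) (C 6) ?_ ?_ ?_
    (C 7) (C 8) ?_ ?_ ?_ (C 9) ?_ ?_ ?_ (C 10) ?_ ?_ ?_ (C 11) ?_ ?_ ?_ (C 12) ?_ ?_ ?_ <;>
  exact C.valid (by decide)

theorem yuOh14_colorable_five : (orthoGraph yuOh14Vecs).Colorable 5 := by
  rw [yuOh14Vecs_eq_intCast]
  exact ⟨Coloring.mk ![0, 1, 2, 1, 2, 0, 2, 0, 1, 0, 1, 3, 2, 4] (by decide)⟩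

theorem yuOh14_chromaticNumber : (orthoGraph yuOh14Vecs).chromaticNumber = 5 :=
  chromaticNumber_eq_iff_colorable_not_colorable.2 ⟨yuOh14_colorable_five, fun h4 =>
    yuOh14_comap_castSucc_not_colorable_three <|
      yuOh14_isUniversal_last.colorable_comap Fin.castSucc_ne_last h4⟩

/-- The orthogonality graph `YO⁴₁₄` of the 14 vectors obtained from
the Yu–Oh rays by adjoining a vector orthogonal to all of them has chromatic number
`5`; any two distinct vertices are adjacent or share a common neighbor (diameter at
most 2); and the graph is not complete (so its diameter is exactly 2). -/
theorem stmt_13 :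
    (orthoGraph yuOh14Vecs).chromaticNumber = 5 ∧
    (∀ i j : Fin 14, i ≠ j →
      ((orthoGraph yuOh14Vecs).Adj i j ∨
        ∃ k : Fin 14, (orthoGraph yuOh14Vecs).Adj i k ∧ (orthoGraph yuOh14Vecs).Adj k j)) ∧
    (∃ i j : Fin 14, i ≠ j ∧ ¬ (orthoGraph yuOh14Vecs).Adj i j) ∧
    (orthoGraph yuOh14Vecs).ediam = 2 := by
  have hdist : ∀ i j : Fin 14, i ≠ j → ((orthoGraph yuOh14Vecs).Adj i j ∨
      ∃ k, (orthoGraph yuOh14Vecs).Adj i k ∧ (orthoGraph yuOh14Vecs).Adj k j) := by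
    rw [yuOh14Vecs_eq_intCast]
    decide
  have hnonadj : ∃ i j : Fin 14, i ≠ j ∧ ¬ (orthoGraph yuOh14Vecs).Adj i j := by
    rw [yuOh14Vecs_eq_intCast]
    decide
  exact ⟨yuOh14_chromaticNumber, hdist, hnonadj, ediam_eq_two_of_adj_or_exists_adj hdist hnonadj⟩
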